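/- arXiv:1004.1484 — 3 statements merged into one kernel-verified Lean document; each statement's English description precedes it below -/
import Mathlib

section
/- Let ν be a nonconstant rational function of degree d, and let E ⊆ ℂ ∪ {∞} be a finite set with k elements. Then the totally ramified value number of the restriction of ν to (ℂ ∪ {∞}) \ E satisfies δ_ν ≤ 2 + (k−2)/d. -/
open scoped Classical

noncomputable section

/-- A rational function as a map `ℂ → ℂ ∪ {∞}` (value `∞` at poles). -/
def sphereEval (ν : RatFunc ℂ) (z : ℂ) : OnePoint ℂ :=
  if ν.denom.eval z = 0 then OnePoint.infty
  else ((ν.num.eval z / ν.denom.eval z : ℂ) : OnePoint ℂ)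

/-- The multiplicity with which a rational function attains its value at `z ∈ ℂ`. -/
def multAt (ν : RatFunc ℂ) (z : ℂ) : ℕ :=
  if ν.denom.eval z = 0 then Polynomial.rootMultiplicity z ν.denom
  else Polynomial.rootMultiplicity z
    (ν.num - Polynomial.C (ν.num.eval z / ν.denom.eval z) * ν.denom)

/-- The degree of a rational function: `max (deg num) (deg denom)`. -/
def ratDegree (ν : RatFunc ℂ) : ℕ := max ν.num.natDegree ν.denom.natDegree

/-- The value of a rational function at the point `∞` of the Riemann sphere. -/
def valAtInfty (ν : RatFunc ℂ) : OnePoint ℂ :=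
  if ν.denom.natDegree < ν.num.natDegree then OnePoint.infty
  else ((ν.num.coeff (ratDegree ν) / ν.denom.coeff (ratDegree ν) : ℂ) : OnePoint ℂ)

/-- The multiplicity with which a rational function attains its value at `∞`,
computed in the coordinate `w = 1/z` via the reflected polynomials. -/
def multAtInfty (ν : RatFunc ℂ) : ℕ :=
  let P := Polynomial.reflect (ratDegree ν) ν.num
  let Q := Polynomial.reflect (ratDegree ν) ν.denom
  if Q.eval 0 = 0 then Polynomial.rootMultiplicity 0 Q
  else Polynomial.rootMultiplicity 0 (P - Polynomial.C (P.eval 0 / Q.eval 0) * Q)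

/-- A rational function as a self-map of the Riemann sphere `ℂ ∪ {∞}`. -/
def sEval (ν : RatFunc ℂ) (p : OnePoint ℂ) : OnePoint ℂ :=
  Option.elim (p : Option ℂ) (valAtInfty ν) (sphereEval ν)

/-- The multiplicity with which a rational function attains its value at a point
of the Riemann sphere. -/
def sMult (ν : RatFunc ℂ) (p : OnePoint ℂ) : ℕ :=
  Option.elim (p : Option ℂ) (multAtInfty ν) (multAt ν)

/-- `b` is omitted by `ν` restricted to `S ⊆ ℂ ∪ {∞}`. -/
def omittedOnS (ν : RatFunc ℂ) (S : Set (OnePoint ℂ)) (b : OnePoint ℂ) : Prop :=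
  ∀ p ∈ S, sEval ν p ≠ b

/-- `b` is a totally ramified value of `ν` restricted to `S ⊆ ℂ ∪ {∞}`: every point
of `S` where `ν` attains `b` has multiplicity at least two (omitted values are
totally ramified vacuously). -/
def totallyRamifiedOnS (ν : RatFunc ℂ) (S : Set (OnePoint ℂ)) (b : OnePoint ℂ) : Prop :=
  ∀ p ∈ S, sEval ν p = b → 2 ≤ sMult ν p

/-- The contribution `1 − 1/m_b` of the value `b` to the totally ramified value
number `δ_ν` of `ν` restricted to `S` (`m_b = ∞`, i.e. weight `1`, for omitted
values; otherwise `m_b` is the minimal multiplicity over the preimage of `b`). -/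
def ramWeightS (ν : RatFunc ℂ) (S : Set (OnePoint ℂ)) (b : OnePoint ℂ) : ℝ :=
  if omittedOnS ν S b then 1
  else 1 - 1 / ((sInf (sMult ν '' {p | p ∈ S ∧ sEval ν p = b}) : ℕ) : ℝ)

namespace TRVNAux

open Polynomial

/-- The fiber polynomial of `ν` over `b`. -/
def fiberPoly (ν : RatFunc ℂ) (b : OnePoint ℂ) : Polynomial ℂ :=
  Option.elim (b : Option ℂ) ν.denom (fun c => ν.num - Polynomial.C c * ν.denom)

@[simp] lemma fiberPoly_infty (ν : RatFunc ℂ) : fiberPoly ν OnePoint.infty = ν.denom := rfl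

@[simp] lemma fiberPoly_coe (ν : RatFunc ℂ) (c : ℂ) :
    fiberPoly ν (c : OnePoint ℂ) = ν.num - Polynomial.C c * ν.denom := rfl

@[simp] lemma sEval_infty (ν : RatFunc ℂ) : sEval ν OnePoint.infty = valAtInfty ν := rfl

@[simp] lemma sEval_coe (ν : RatFunc ℂ) (z : ℂ) : sEval ν (z : OnePoint ℂ) = sphereEval ν z := rfl

@[simp] lemma sMult_infty (ν : RatFunc ℂ) : sMult ν OnePoint.infty = multAtInfty ν := rfl

@[simp] lemma sMult_coe (ν : RatFunc ℂ) (z : ℂ) : sMult ν (z : OnePoint ℂ) = multAt ν z := rfl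

lemma num_ne_zero (ν : RatFunc ℂ) (h : 0 < ratDegree ν) : ν.num ≠ 0 := by
  intro h0
  have hc := ν.isCoprime_num_denom
  rw [h0] at hc
  have hu : IsUnit ν.denom := isCoprime_zero_left.mp hc
  have h1 := Polynomial.natDegree_eq_zero_of_isUnit hu
  unfold ratDegree at h
  rw [h0] at h
  simp [h1] at h

lemma fiberPoly_ne_zero (ν : RatFunc ℂ) (h : 0 < ratDegree ν) (b : OnePoint ℂ) :
    fiberPoly ν b ≠ 0 := by
  cases b with
  | infty => exact ν.denom_ne_zero
  | coe c =>
    simp only [fiberPoly_coe]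
    intro h0
    have hnum : ν.num = Polynomial.C c * ν.denom := by linear_combination h0
    have hdvd : ν.denom ∣ ν.num := ⟨Polynomial.C c, by rw [hnum]; ring⟩
    have hu : IsUnit ν.denom := ν.isCoprime_num_denom.isUnit_of_dvd' hdvd dvd_rfl
    have h1 := Polynomial.natDegree_eq_zero_of_isUnit hu
    have h2 : ν.num.natDegree ≤ 0 := by
      rw [hnum]
      exact (Polynomial.natDegree_C_mul_le c ν.denom).trans h1.le
    unfold ratDegree at h
    omega

lemma natDegree_fiberPoly_le (ν : RatFunc ℂ) (b : OnePoint ℂ) :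
    (fiberPoly ν b).natDegree ≤ ratDegree ν := by
  cases b with
  | infty => exact le_max_right _ _
  | coe c =>
    simp only [fiberPoly_coe]
    refine (Polynomial.natDegree_sub_le _ _).trans (max_le (le_max_left _ _) ?_)
    exact (Polynomial.natDegree_C_mul_le c ν.denom).trans (le_max_right _ _)

lemma num_eval_ne_zero (ν : RatFunc ℂ) (z : ℂ) (hz : ν.denom.eval z = 0) :
    ν.num.eval z ≠ 0 := by
  obtain ⟨a, b, hab⟩ := ν.isCoprime_num_denom
  intro h0
  have := congrArg (Polynomial.eval z) hab
  simp [h0, hz] at this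

lemma sphereEval_eq_iff (ν : RatFunc ℂ) (z : ℂ) (b : OnePoint ℂ) :
    sphereEval ν z = b ↔ (fiberPoly ν b).eval z = 0 := by
  by_cases hz : ν.denom.eval z = 0
  · cases b with
    | infty => simp [sphereEval, hz, fiberPoly_infty]
    | coe c =>
      simp only [sphereEval, if_pos hz, fiberPoly_coe]
      constructor
      · intro h; exact absurd h.symm (OnePoint.coe_ne_infty c)
      · intro h
        rw [Polynomial.eval_sub, Polynomial.eval_mul, Polynomial.eval_C, hz, mul_zero,
          sub_zero] at h
        exact absurd h (num_eval_ne_zero ν z hz)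
  · cases b with
    | infty =>
      simp [sphereEval, if_neg hz, hz]
    | coe c =>
      simp only [sphereEval, if_neg hz, fiberPoly_coe, OnePoint.coe_eq_coe,
        Polynomial.eval_sub, Polynomial.eval_mul, Polynomial.eval_C]
      rw [div_eq_iff hz, sub_eq_zero]

lemma multAt_eq (ν : RatFunc ℂ) (z : ℂ) (b : OnePoint ℂ) (h : sphereEval ν z = b) :
    multAt ν z = Polynomial.rootMultiplicity z (fiberPoly ν b) := by
  by_cases hz : ν.denom.eval z = 0
  · have hb : b = OnePoint.infty := by rw [← h]; simp [sphereEval, hz]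
    subst hb
    simp [multAt, hz]
  · have hb : b = ((ν.num.eval z / ν.denom.eval z : ℂ) : OnePoint ℂ) := by
      rw [← h]; simp [sphereEval, hz]
    subst hb
    simp [multAt, hz]

/-- Reflect of a nonzero polynomial with degree at most `N`. -/
lemma reflect_facts (p : Polynomial ℂ) (hp : p ≠ 0) (N : ℕ) (hN : p.natDegree ≤ N) :
    Polynomial.reflect N p ≠ 0 ∧
      (Polynomial.reflect N p).natTrailingDegree = N - p.natDegree := by
  have h1 : (Polynomial.reflect N p).coeff (N - p.natDegree) = p.leadingCoeff := by
    rw [Polynomial.coeff_reflect, Polynomial.revAt_le (by omega)]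
    congr 1
    omega
  have hlc : p.leadingCoeff ≠ 0 := Polynomial.leadingCoeff_ne_zero.mpr hp
  have hne : Polynomial.reflect N p ≠ 0 := by
    intro h0
    rw [h0, Polynomial.coeff_zero] at h1
    exact hlc h1.symm
  refine ⟨hne, le_antisymm ?_ ?_⟩
  · exact Polynomial.natTrailingDegree_le_of_ne_zero (h1 ▸ hlc)
  · refine Polynomial.le_natTrailingDegree hne ?_
    intro m hm
    rw [Polynomial.coeff_reflect, Polynomial.revAt_le (by omega)]
    exact Polynomial.coeff_eq_zero_of_natDegree_lt (by omega)

lemma reflect_sub (N : ℕ) (f g : Polynomial ℂ) :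
    Polynomial.reflect N (f - g) = Polynomial.reflect N f - Polynomial.reflect N g := by
  ext i
  simp [Polynomial.coeff_reflect]

def finFiber (ν : RatFunc ℂ) (b : OnePoint ℂ) : Finset ℂ := (fiberPoly ν b).roots.toFinset

lemma mem_finFiber (ν : RatFunc ℂ) (h : 0 < ratDegree ν) (b : OnePoint ℂ) (z : ℂ) :
    z ∈ finFiber ν b ↔ sphereEval ν z = b := by
  rw [finFiber, Multiset.mem_toFinset, Polynomial.mem_roots (fiberPoly_ne_zero ν h b),
    sphereEval_eq_iff]
  exact Iff.rfl

lemma sum_multAt_finFiber (ν : RatFunc ℂ) (h : 0 < ratDegree ν) (b : OnePoint ℂ) :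
    ∑ z ∈ finFiber ν b, multAt ν z = (fiberPoly ν b).natDegree := by
  have hcard : ((fiberPoly ν b).roots).card = (fiberPoly ν b).natDegree :=
    Polynomial.splits_iff_card_roots.mp (IsAlgClosed.splits _)
  rw [← hcard, ← Multiset.toFinset_sum_count_eq]
  apply Finset.sum_congr rfl
  intro z hz
  rw [multAt_eq ν z b ((mem_finFiber ν h b z).mp hz), Polynomial.count_roots]

lemma one_le_multAt_of_mem (ν : RatFunc ℂ) (h : 0 < ratDegree ν) (b : OnePoint ℂ) (z : ℂ)
    (hz : z ∈ finFiber ν b) : 1 ≤ multAt ν z := by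
  rw [multAt_eq ν z b ((mem_finFiber ν h b z).mp hz)]
  have hroot : (fiberPoly ν b).IsRoot z := by
    rw [mem_finFiber ν h b z, sphereEval_eq_iff] at hz
    exact hz
  exact (Polynomial.rootMultiplicity_pos (fiberPoly_ne_zero ν h b)).mpr hroot

/-- The Wronskian `P'Q - PQ'`. -/
def wron (ν : RatFunc ℂ) : Polynomial ℂ :=
  ν.num.derivative * ν.denom - ν.num * ν.denom.derivative

lemma multAtInfty_def (ν : RatFunc ℂ) : multAtInfty ν =
    if (Polynomial.reflect (ratDegree ν) ν.denom).eval 0 = 0 then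
      Polynomial.rootMultiplicity 0 (Polynomial.reflect (ratDegree ν) ν.denom)
    else Polynomial.rootMultiplicity 0 (Polynomial.reflect (ratDegree ν) ν.num -
      Polynomial.C ((Polynomial.reflect (ratDegree ν) ν.num).eval 0 /
        (Polynomial.reflect (ratDegree ν) ν.denom).eval 0) *
      Polynomial.reflect (ratDegree ν) ν.denom) := rfl

lemma eval_zero_reflect (p : Polynomial ℂ) (N : ℕ) :
    (Polynomial.reflect N p).eval 0 = p.coeff N := by
  rw [← Polynomial.coeff_zero_eq_eval_zero, Polynomial.coeff_reflect,
    Polynomial.revAt_le (Nat.zero_le N), Nat.sub_zero]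

lemma infty_facts (ν : RatFunc ℂ) (h : 0 < ratDegree ν) :
    1 ≤ multAtInfty ν ∧
    (∀ b, valAtInfty ν = b → (fiberPoly ν b).natDegree + multAtInfty ν = ratDegree ν) ∧
    (∀ b, valAtInfty ν ≠ b → (fiberPoly ν b).natDegree = ratDegree ν) ∧
    (wron ν).natDegree + multAtInfty ν + 1 ≤ 2 * ratDegree ν := by
  have hQ0 : ν.denom ≠ 0 := ν.denom_ne_zero
  have hP0 : ν.num ≠ 0 := num_ne_zero ν h
  have hQd : ν.denom.natDegree ≤ ratDegree ν := le_max_right _ _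
  have hPd : ν.num.natDegree ≤ ratDegree ν := le_max_left _ _
  by_cases hlt : ν.denom.natDegree < ν.num.natDegree
  · -- degree of numerator dominates; value at infinity is ∞
    have hdP : ratDegree ν = ν.num.natDegree := max_eq_left hlt.le
    have hQcoeff : ν.denom.coeff (ratDegree ν) = 0 :=
      Polynomial.coeff_eq_zero_of_natDegree_lt (by omega)
    have hval : valAtInfty ν = OnePoint.infty := by
      rw [valAtInfty, if_pos hlt]
    have hm : multAtInfty ν = ratDegree ν - ν.denom.natDegree := by
      rw [multAtInfty_def, if_pos (by rw [eval_zero_reflect, hQcoeff]),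
        Polynomial.rootMultiplicity_eq_natTrailingDegree',
        (reflect_facts ν.denom hQ0 (ratDegree ν) hQd).2]
    have hWbound : (wron ν).natDegree ≤ ratDegree ν - 1 + ν.denom.natDegree := by
      have h1 : (ν.num.derivative * ν.denom).natDegree ≤ ratDegree ν - 1 + ν.denom.natDegree := by
        refine (Polynomial.natDegree_mul_le).trans (add_le_add ?_ le_rfl)
        exact (Polynomial.natDegree_derivative_le _).trans (by omega)
      have h2 : (ν.num * ν.denom.derivative).natDegree ≤ ratDegree ν - 1 + ν.denom.natDegree := by
        rcases Nat.eq_zero_or_pos ν.denom.natDegree with hq | hq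
        · obtain ⟨a, ha⟩ := Polynomial.natDegree_eq_zero.mp hq
          rw [← ha, Polynomial.derivative_C, mul_zero, Polynomial.natDegree_zero]
          omega
        · refine (Polynomial.natDegree_mul_le).trans ?_
          have := Polynomial.natDegree_derivative_le ν.denom
          omega
      exact (Polynomial.natDegree_sub_le _ _).trans (max_le h1 h2)
    refine ⟨by omega, ?_, ?_, by omega⟩
    · intro b hb
      rw [← hb, hval, fiberPoly_infty]
      omega
    · intro b hb
      cases b with
      | infty => exact absurd hval hb
      | coe c =>
        rw [fiberPoly_coe,
          Polynomial.natDegree_sub_eq_left_of_natDegree_lt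
            (lt_of_le_of_lt (Polynomial.natDegree_C_mul_le c ν.denom) (by omega))]
        omega
  · -- degree of denominator dominates
    have hdQ : ratDegree ν = ν.denom.natDegree := max_eq_right (by omega)
    have hQc : ν.denom.coeff (ratDegree ν) ≠ 0 := by
      rw [hdQ]
      exact Polynomial.leadingCoeff_ne_zero.mpr hQ0
    set c0 : ℂ := ν.num.coeff (ratDegree ν) / ν.denom.coeff (ratDegree ν) with hc0
    have hval : valAtInfty ν = (c0 : OnePoint ℂ) := by
      rw [valAtInfty, if_neg hlt]
    set G : Polynomial ℂ := ν.num - Polynomial.C c0 * ν.denom with hGdef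
    have hG0 : G ≠ 0 := fiberPoly_ne_zero ν h (c0 : OnePoint ℂ)
    have hGd : G.natDegree ≤ ratDegree ν := natDegree_fiberPoly_le ν (c0 : OnePoint ℂ)
    have hGcoeff : G.coeff (ratDegree ν) = 0 := by
      rw [hGdef, Polynomial.coeff_sub, Polynomial.coeff_C_mul, hc0,
        div_mul_cancel₀ _ hQc, sub_self]
    have hGlt : G.natDegree < ratDegree ν := by
      rcases lt_or_eq_of_le hGd with h' | h'
      · exact h'
      · exfalso
        apply Polynomial.leadingCoeff_ne_zero.mpr hG0
        rw [Polynomial.leadingCoeff, h', hGcoeff]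
    have hreflG : Polynomial.reflect (ratDegree ν) G =
        Polynomial.reflect (ratDegree ν) ν.num -
          Polynomial.C c0 * Polynomial.reflect (ratDegree ν) ν.denom := by
      rw [hGdef, reflect_sub, Polynomial.reflect_C_mul]
    have hm : multAtInfty ν = ratDegree ν - G.natDegree := by
      rw [multAtInfty_def, if_neg (by rw [eval_zero_reflect]; exact hQc)]
      rw [eval_zero_reflect, eval_zero_reflect, ← hc0, ← hreflG,
        Polynomial.rootMultiplicity_eq_natTrailingDegree',
        (reflect_facts G hG0 (ratDegree ν) hGd).2]
    have hWid : wron ν = G.derivative * ν.denom - G * ν.denom.derivative := by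
      rw [hGdef]
      simp only [wron, Polynomial.derivative_sub, Polynomial.derivative_C_mul]
      ring
    have hWbound : (wron ν).natDegree ≤ G.natDegree + ratDegree ν - 1 := by
      rw [hWid]
      have h1 : (G.derivative * ν.denom).natDegree ≤ G.natDegree + ratDegree ν - 1 := by
        rcases Nat.eq_zero_or_pos G.natDegree with hg | hg
        · obtain ⟨a, ha⟩ := Polynomial.natDegree_eq_zero.mp hg
          rw [← ha, Polynomial.derivative_C, zero_mul, Polynomial.natDegree_zero]
          omega
        · refine (Polynomial.natDegree_mul_le).trans ?_
          have := Polynomial.natDegree_derivative_le G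
          omega
      have h2 : (G * ν.denom.derivative).natDegree ≤ G.natDegree + ratDegree ν - 1 := by
        refine (Polynomial.natDegree_mul_le).trans ?_
        have := Polynomial.natDegree_derivative_le ν.denom
        omega
      exact (Polynomial.natDegree_sub_le _ _).trans (max_le h1 h2)
    refine ⟨by omega, ?_, ?_, by omega⟩
    · intro b hb
      rw [← hb, hval, fiberPoly_coe, ← hGdef]
      omega
    · intro b hb
      cases b with
      | infty =>
        rw [fiberPoly_infty]
        omega
      | coe c =>
        have hcc : c ≠ c0 := by
          intro h'
          exact hb (by rw [hval, h'])
        have hcoeffne : (fiberPoly ν (c : OnePoint ℂ)).coeff (ratDegree ν) ≠ 0 := by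
          rw [fiberPoly_coe, Polynomial.coeff_sub, Polynomial.coeff_C_mul]
          intro h'
          apply hcc
          rw [hc0, eq_div_iff hQc]
          linear_combination -h'
        have hge : ratDegree ν ≤ (fiberPoly ν (c : OnePoint ℂ)).natDegree :=
          Polynomial.le_natDegree_of_ne_zero hcoeffne
        exact le_antisymm (natDegree_fiberPoly_le ν _) hge

lemma wron_ne_zero (ν : RatFunc ℂ) (h : 0 < ratDegree ν) : wron ν ≠ 0 := by
  intro h0
  have hP0 : ν.num ≠ 0 := num_ne_zero ν h
  have heq : ν.num.derivative * ν.denom = ν.num * ν.denom.derivative := by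
    have := sub_eq_zero.mp h0
    exact this
  have hdvd : ν.num ∣ ν.num.derivative * ν.denom := ⟨ν.denom.derivative, by rw [heq]⟩
  have hdvd' : ν.num ∣ ν.num.derivative :=
    (ν.isCoprime_num_denom).dvd_of_dvd_mul_right hdvd
  have hP' : ν.num.derivative = 0 := by
    by_contra hne
    have h1 : ν.num.natDegree ≤ ν.num.derivative.natDegree :=
      Polynomial.natDegree_le_of_dvd hdvd' hne
    have h2 : ν.num.natDegree ≠ 0 := by
      intro hz
      obtain ⟨a, ha⟩ := Polynomial.natDegree_eq_zero.mp hz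
      rw [← ha, Polynomial.derivative_C] at hne
      exact hne rfl
    have h3 := Polynomial.natDegree_derivative_lt h2
    omega
  have hPdeg : ν.num.natDegree = 0 := Polynomial.natDegree_eq_zero_of_derivative_eq_zero hP'
  have hQ' : ν.num * ν.denom.derivative = 0 := by rw [← heq, hP', zero_mul]
  have hQd0 : ν.denom.derivative = 0 := by
    rcases mul_eq_zero.mp hQ' with h' | h'
    · exact absurd h' hP0
    · exact h'
  have hQdeg : ν.denom.natDegree = 0 := Polynomial.natDegree_eq_zero_of_derivative_eq_zero hQd0
  unfold ratDegree at h
  omega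

lemma multAt_sub_one_le (ν : RatFunc ℂ) (h : 0 < ratDegree ν) (z : ℂ) (b : OnePoint ℂ)
    (hz : sphereEval ν z = b) :
    multAt ν z - 1 ≤ (wron ν).rootMultiplicity z := by
  have hW : wron ν ≠ 0 := wron_ne_zero ν h
  rw [multAt_eq ν z b hz]
  set F := fiberPoly ν b with hF
  set m := F.rootMultiplicity z with hm
  have hdvdF : (Polynomial.X - Polynomial.C z) ^ m ∣ F := F.pow_rootMultiplicity_dvd z
  have h1 : (Polynomial.X - Polynomial.C z) ^ (m - 1) ∣ F.derivative :=
    Polynomial.pow_sub_one_dvd_derivative_of_pow_dvd hdvdF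
  have h2 : (Polynomial.X - Polynomial.C z) ^ (m - 1) ∣ F :=
    (pow_dvd_pow _ (Nat.sub_le m 1)).trans hdvdF
  rw [Polynomial.le_rootMultiplicity_iff hW]
  cases b with
  | infty =>
    have hid : wron ν = ν.num.derivative * F - ν.num * F.derivative := by rw [hF]; rfl
    rw [hid]
    exact dvd_sub (h2.mul_left _) (h1.mul_left _)
  | coe c =>
    have hid : wron ν = F.derivative * ν.denom - F * ν.denom.derivative := by
      rw [hF]
      simp only [fiberPoly_coe, wron, Polynomial.derivative_sub, Polynomial.derivative_C_mul]
      ring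
    rw [hid]
    exact dvd_sub (h1.mul_right _) (h2.mul_right _)

lemma sum_rootMult_le (W : Polynomial ℂ) (hW : W ≠ 0) (t : Finset ℂ) :
    ∑ z ∈ t, W.rootMultiplicity z ≤ W.natDegree := by
  have h1 : ∑ z ∈ t, W.rootMultiplicity z = ∑ z ∈ t, W.roots.count z := by
    simp [Polynomial.count_roots]
  rw [h1]
  calc ∑ z ∈ t, W.roots.count z
      ≤ ∑ z ∈ t ∪ W.roots.toFinset, W.roots.count z :=
        Finset.sum_le_sum_of_subset Finset.subset_union_left
    _ = ∑ z ∈ W.roots.toFinset, W.roots.count z := by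
        refine (Finset.sum_subset Finset.subset_union_right ?_).symm
        intro x _ hx
        rw [Multiset.count_eq_zero]
        intro hmem
        exact hx (Multiset.mem_toFinset.mpr hmem)
    _ = W.roots.card := Multiset.toFinset_sum_count_eq _
    _ ≤ W.natDegree := W.card_roots'

def sFiber (ν : RatFunc ℂ) (b : OnePoint ℂ) : Finset (OnePoint ℂ) :=
  (finFiber ν b).image OnePoint.some ∪
    (if valAtInfty ν = b then {OnePoint.infty} else ∅)

lemma disj_sFiber (ν : RatFunc ℂ) (b : OnePoint ℂ) :
    Disjoint ((finFiber ν b).image OnePoint.some)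
      (if valAtInfty ν = b then ({OnePoint.infty} : Finset (OnePoint ℂ)) else ∅) := by
  refine Finset.disjoint_left.mpr ?_
  intro p hp1 hp2
  obtain ⟨z, _, rfl⟩ := Finset.mem_image.mp hp1
  split at hp2
  · exact OnePoint.coe_ne_infty z (Finset.mem_singleton.mp hp2)
  · exact absurd hp2 (Finset.notMem_empty _)

lemma mem_sFiber (ν : RatFunc ℂ) (h : 0 < ratDegree ν) (b : OnePoint ℂ) (p : OnePoint ℂ) :
    p ∈ sFiber ν b ↔ sEval ν p = b := by
  rw [sFiber, Finset.mem_union]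
  cases p with
  | infty =>
    have h1 : OnePoint.infty ∉ (finFiber ν b).image OnePoint.some := by
      intro hmem
      obtain ⟨z, _, hz⟩ := Finset.mem_image.mp hmem
      exact OnePoint.coe_ne_infty z hz
    have h2 : (OnePoint.infty ∈ (if valAtInfty ν = b then ({OnePoint.infty} : Finset (OnePoint ℂ))
        else ∅)) ↔ valAtInfty ν = b := by
      split <;> simp [*]
    rw [sEval_infty]
    simp [h1, h2]
  | coe z =>
    have h1 : ((z : OnePoint ℂ) ∈ (finFiber ν b).image OnePoint.some)
        ↔ z ∈ finFiber ν b := by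
      constructor
      · intro hmem
        obtain ⟨w, hw, hwz⟩ := Finset.mem_image.mp hmem
        rwa [OnePoint.coe_eq_coe.mp hwz] at hw
      · intro hmem
        exact Finset.mem_image.mpr ⟨z, hmem, rfl⟩
    have h2 : ((z : OnePoint ℂ) ∈ (if valAtInfty ν = b then ({OnePoint.infty} : Finset (OnePoint ℂ))
        else ∅)) ↔ False := by
      split <;> simp [OnePoint.coe_ne_infty]
    rw [sEval_coe]
    simp only [h1, h2, or_false, mem_finFiber ν h b z]

lemma sum_image_coe (ν : RatFunc ℂ) (f : OnePoint ℂ → ℕ) (b : OnePoint ℂ) :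
    ∑ p ∈ (finFiber ν b).image OnePoint.some, f p
      = ∑ z ∈ finFiber ν b, f (OnePoint.some z) :=
  Finset.sum_image (fun x _ y _ hxy => OnePoint.coe_eq_coe.mp hxy)

lemma sum_sMult_sFiber (ν : RatFunc ℂ) (h : 0 < ratDegree ν) (b : OnePoint ℂ) :
    ∑ p ∈ sFiber ν b, sMult ν p = ratDegree ν := by
  obtain ⟨h1, h2, h3, _⟩ := infty_facts ν h
  rw [sFiber, Finset.sum_union (disj_sFiber ν b), sum_image_coe]
  have hfin : ∑ z ∈ finFiber ν b, sMult ν (z : OnePoint ℂ) = (fiberPoly ν b).natDegree := by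
    rw [← sum_multAt_finFiber ν h b]
    exact Finset.sum_congr rfl fun z _ => sMult_coe ν z
  rw [hfin]
  by_cases hval : valAtInfty ν = b
  · rw [if_pos hval]
    simp only [Finset.sum_singleton, sMult_infty]
    exact h2 b hval
  · rw [if_neg hval]
    simp only [Finset.sum_empty, add_zero]
    exact h3 b hval

lemma one_le_sMult_of_mem (ν : RatFunc ℂ) (h : 0 < ratDegree ν) (b : OnePoint ℂ)
    (p : OnePoint ℂ) (hp : p ∈ sFiber ν b) : 1 ≤ sMult ν p := by
  have hp' : sEval ν p = b := (mem_sFiber ν h b p).mp hp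
  cases p with
  | infty => exact (infty_facts ν h).1
  | coe z =>
    rw [sMult_coe]
    exact one_le_multAt_of_mem ν h b z ((mem_finFiber ν h b z).mpr hp')

lemma ram_sFiber_split (ν : RatFunc ℂ) (b : OnePoint ℂ) :
    ∑ p ∈ sFiber ν b, (sMult ν p - 1)
      = ∑ z ∈ finFiber ν b, (multAt ν z - 1)
        + (if valAtInfty ν = b then multAtInfty ν - 1 else 0) := by
  rw [sFiber, Finset.sum_union (disj_sFiber ν b), sum_image_coe]
  congr 1
  split <;> simp

lemma pairwise_disjoint_finFiber (ν : RatFunc ℂ) (h : 0 < ratDegree ν) (T : Finset (OnePoint ℂ)) :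
    ∀ b1 ∈ T, ∀ b2 ∈ T, b1 ≠ b2 → Disjoint (finFiber ν b1) (finFiber ν b2) := by
  intro b1 _ b2 _ hne
  refine Finset.disjoint_left.mpr ?_
  intro z hz1 hz2
  rw [mem_finFiber ν h] at hz1 hz2
  exact hne (hz1 ▸ hz2 ▸ rfl)

lemma global_ram_bound (ν : RatFunc ℂ) (h : 0 < ratDegree ν) (T : Finset (OnePoint ℂ)) :
    ∑ b ∈ T, ∑ p ∈ sFiber ν b, (sMult ν p - 1) + 2 ≤ 2 * ratDegree ν := by
  obtain ⟨h1, _, _, h4⟩ := infty_facts ν h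
  have hW : wron ν ≠ 0 := wron_ne_zero ν h
  have hsplit : ∑ b ∈ T, ∑ p ∈ sFiber ν b, (sMult ν p - 1)
      = ∑ b ∈ T, (∑ z ∈ finFiber ν b, (multAt ν z - 1)
        + (if valAtInfty ν = b then multAtInfty ν - 1 else 0)) :=
    Finset.sum_congr rfl fun b _ => ram_sFiber_split ν b
  rw [hsplit, Finset.sum_add_distrib]
  have hA : ∑ b ∈ T, ∑ z ∈ finFiber ν b, (multAt ν z - 1) ≤ (wron ν).natDegree := by
    have hle : ∑ b ∈ T, ∑ z ∈ finFiber ν b, (multAt ν z - 1)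
        ≤ ∑ b ∈ T, ∑ z ∈ finFiber ν b, (wron ν).rootMultiplicity z := by
      refine Finset.sum_le_sum fun b _ => Finset.sum_le_sum fun z hz => ?_
      exact multAt_sub_one_le ν h z b ((mem_finFiber ν h b z).mp hz)
    refine hle.trans ?_
    rw [← Finset.sum_biUnion (pairwise_disjoint_finFiber ν h T)]
    exact sum_rootMult_le (wron ν) hW _
  have hB : ∑ b ∈ T, (if valAtInfty ν = b then multAtInfty ν - 1 else 0)
      ≤ multAtInfty ν - 1 := by
    rw [Finset.sum_ite_eq T (valAtInfty ν) (fun _ => multAtInfty ν - 1)]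
    split <;> omega
  omega

end TRVNAux

/-- The combinatorial core of **Theorem 2.1**: a nonconstant rational function `ν`
of degree `d`, restricted to the complement of a finite set `E ⊆ ℂ ∪ {∞}` with `k`
elements, has totally ramified value number `δ_ν ≤ 2 + (k−2)/d` (expressed by
bounding every finite partial sum of the nonnegative weights `1 − 1/m_b` over
totally ramified values `b`). -/
theorem rational_totally_ramified_value_number_estimate
    (ν : RatFunc ℂ) (d : ℕ) (hd : d = ratDegree ν) (hdpos : 0 < d)
    (k : ℕ) (E : Finset (OnePoint ℂ)) (hE : E.card = k) :
    ∀ T : Finset (OnePoint ℂ),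
      (∀ b ∈ T, totallyRamifiedOnS ν {p | p ∉ E} b) →
      ∑ b ∈ T, ramWeightS ν {p | p ∉ E} b ≤ 2 + ((k : ℝ) - 2) / d := by
  subst hd
  intro T hT
  have h : 0 < ratDegree ν := hdpos
  open TRVNAux in
  set D := ratDegree ν with hD
  set ram : OnePoint ℂ → ℕ := fun b => ∑ p ∈ TRVNAux.sFiber ν b, (sMult ν p - 1) with hram
  set nS : OnePoint ℂ → ℕ := fun b => ((TRVNAux.sFiber ν b).filter (fun p => p ∉ E)).card
    with hnS
  set nE : OnePoint ℂ → ℕ := fun b => ((TRVNAux.sFiber ν b).filter (fun p => p ∈ E)).card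
    with hnE
  have hcardsplit : ∀ b, nE b + nS b = (TRVNAux.sFiber ν b).card := by
    intro b
    exact Finset.card_filter_add_card_filter_not (p := fun p => p ∈ E)
  have hsum : ∀ b, ram b + (TRVNAux.sFiber ν b).card = D := by
    intro b
    have hone : ∀ p ∈ TRVNAux.sFiber ν b, sMult ν p - 1 + 1 = sMult ν p := fun p hp =>
      Nat.succ_pred_eq_of_pos (TRVNAux.one_le_sMult_of_mem ν h b p hp)
    rw [hram, Finset.card_eq_sum_ones, ← Finset.sum_add_distrib,
      Finset.sum_congr rfl hone, TRVNAux.sum_sMult_sFiber ν h b]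
  have hDpos : (0:ℝ) < (D:ℝ) := by exact_mod_cast h
  have key : ∀ b ∈ T, ramWeightS ν {p | p ∉ E} b ≤ ((ram b + nE b : ℕ) : ℝ) / (D:ℝ) := by
    intro b hb
    have hcast : ((ram b + nE b : ℕ):ℝ) = (D:ℝ) - nS b := by
      have e1 : ram b + nE b + nS b = D := by
        have := hsum b; have := hcardsplit b; omega
      have := congrArg (fun n : ℕ => (n:ℝ)) e1
      push_cast at this ⊢
      linarith
    by_cases hom : omittedOnS ν {p | p ∉ E} b
    · rw [ramWeightS, if_pos hom]
      have hnS0 : nS b = 0 := by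
        rw [hnS, Finset.card_eq_zero, Finset.filter_eq_empty_iff]
        intro p hp hpE
        exact hom p hpE ((TRVNAux.mem_sFiber ν h b p).mp hp)
      rw [hcast, hnS0]
      simp [ne_of_gt hDpos]
    · rw [ramWeightS, if_neg hom]
      have hne' : (sMult ν '' {p | p ∈ {p | p ∉ E} ∧ sEval ν p = b}).Nonempty := by
        rw [omittedOnS] at hom
        push_neg at hom
        obtain ⟨p, hpS, hpb⟩ := hom
        exact ⟨sMult ν p, ⟨p, ⟨hpS, hpb⟩, rfl⟩⟩
      set M := sInf (sMult ν '' {p | p ∈ {p | p ∉ E} ∧ sEval ν p = b}) with hM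
      obtain ⟨p0, ⟨hp0S, hp0b⟩, hp0M⟩ := Nat.sInf_mem hne'
      have hM2 : 2 ≤ M := by rw [hM, ← hp0M]; exact hT b hb p0 hp0S hp0b
      have hMnS : nS b * M ≤ D := by
        calc nS b * M = ∑ _p ∈ (TRVNAux.sFiber ν b).filter (fun p => p ∉ E), M := by
              rw [Finset.sum_const, smul_eq_mul]
          _ ≤ ∑ p ∈ (TRVNAux.sFiber ν b).filter (fun p => p ∉ E), sMult ν p := by
              refine Finset.sum_le_sum fun p hp => ?_
              rw [Finset.mem_filter] at hp
              exact Nat.sInf_le ⟨p, ⟨hp.2, (TRVNAux.mem_sFiber ν h b p).mp hp.1⟩, rfl⟩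
          _ ≤ ∑ p ∈ TRVNAux.sFiber ν b, sMult ν p :=
              Finset.sum_le_sum_of_subset (Finset.filter_subset _ _)
          _ = D := TRVNAux.sum_sMult_sFiber ν h b
      have hMpos : (0:ℝ) < (M:ℝ) := by exact_mod_cast (by omega : 0 < M)
      have h1 : (nS b : ℝ)/(D:ℝ) ≤ 1/(M:ℝ) := by
        rw [div_le_div_iff₀ hDpos hMpos]
        have hc : ((nS b * M : ℕ):ℝ) ≤ ((D:ℕ):ℝ) := by exact_mod_cast hMnS
        push_cast at hc
        linarith
      have h2 : ((D:ℝ) - nS b)/(D:ℝ) = 1 - (nS b:ℝ)/(D:ℝ) := by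
        field_simp
      rw [hcast, h2]
      linarith
  have hnEsum : ∑ b ∈ T, nE b ≤ k := by
    rw [← hE]
    have hdisj : ∀ b1 ∈ T, ∀ b2 ∈ T, b1 ≠ b2 →
        Disjoint ((TRVNAux.sFiber ν b1).filter (fun p => p ∈ E))
          ((TRVNAux.sFiber ν b2).filter (fun p => p ∈ E)) := by
      intro b1 _ b2 _ hne12
      refine Finset.disjoint_left.mpr ?_
      intro p hp1 hp2
      rw [Finset.mem_filter] at hp1 hp2
      have e1 := (TRVNAux.mem_sFiber ν h b1 p).mp hp1.1
      have e2 := (TRVNAux.mem_sFiber ν h b2 p).mp hp2.1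
      exact hne12 (e1 ▸ e2 ▸ rfl)
    calc ∑ b ∈ T, nE b
        = (T.biUnion (fun b => (TRVNAux.sFiber ν b).filter (fun p => p ∈ E))).card :=
          (Finset.card_biUnion hdisj).symm
      _ ≤ E.card := by
          refine Finset.card_le_card ?_
          intro p hp
          obtain ⟨b, _, hpb⟩ := Finset.mem_biUnion.mp hp
          exact (Finset.mem_filter.mp hpb).2
  have hramsum : ∑ b ∈ T, ram b + 2 ≤ 2 * D := TRVNAux.global_ram_bound ν h T
  calc ∑ b ∈ T, ramWeightS ν {p | p ∉ E} b
      ≤ ∑ b ∈ T, ((ram b + nE b : ℕ) : ℝ) / (D:ℝ) := Finset.sum_le_sum key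
    _ = ((∑ b ∈ T, (ram b + nE b) : ℕ) : ℝ) / (D:ℝ) := by
        rw [← Finset.sum_div]
        push_cast
        ring
    _ ≤ (2*(D:ℝ) - 2 + k) / (D:ℝ) := by
        refine (div_le_div_iff_of_pos_right hDpos).mpr ?_
        have h2 : (∑ b ∈ T, ram b : ℝ) + 2 ≤ 2*(D:ℝ) := by exact_mod_cast hramsum
        have h3 : (∑ b ∈ T, nE b : ℝ) ≤ (k:ℝ) := by exact_mod_cast hnEsum
        push_cast [Finset.sum_add_distrib]
        linarith
    _ = 2 + ((k : ℝ) - 2) / (D:ℝ) := by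
        field_simp
        ring

end
end

section
/- For every integer n ≥ 1, the pair F(z) = z^{n+1}/(n+1), G(z) = z is a Weierstrass data of an improper affine front on ℂ: (F′(z),G′(z)) ≠ (0,0) for all z, the induced metric dτ² = 2(1+|z|^{2n})|dz|² is complete on ℂ, and the Lagrangian Gauss map ν(z) = zⁿ, viewed as a map ℂ → ℂ ∪ {∞}, has totally ramified value number δ_ν = 2 − 1/n: the value ∞ is omitted, the value 0 is attained only at z = 0 with multiplicity n, and there are no other totally ramified values. In particular the upper bound δ_ν ≤ 2 − 1/d of the paper's Theorem 2.1 is attained for (genus, ends, degree) = (0, 1, n). -/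
open MeasureTheory Set
open scoped ENNReal Classical

noncomputable section

/-- A path `γ : [0,1) → ℂ` is divergent if it eventually leaves every compact set. -/
def DivergentPath (γ : ℝ → ℂ) : Prop :=
  ∀ K : Set ℂ, IsCompact K → ∃ t₀ ∈ Ico (0:ℝ) 1, ∀ t ∈ Ico t₀ 1, γ t ∉ K

/-- Length of `γ : [0,1) → ℂ` for the conformal metric `lam(z)²|dz|²`. -/
def PathLength (lam : ℂ → ℝ) (γ : ℝ → ℂ) : ℝ≥0∞ :=
  ∫⁻ t in Ico (0:ℝ) 1, ENNReal.ofReal (lam (γ t) * ‖derivWithin γ (Ico (0:ℝ) 1) t‖)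

/-- The conformal metric `lam(z)²|dz|²` on `Ω` is complete: every (C¹) divergent
path in `Ω` has infinite length. -/
def ConformalComplete (Ω : Set ℂ) (lam : ℂ → ℝ) : Prop :=
  ∀ γ : ℝ → ℂ, ContDiffOn ℝ 1 γ (Ico (0:ℝ) 1) → MapsTo γ (Ico (0:ℝ) 1) Ω →
    DivergentPath γ → PathLength lam γ = ⊤

/-- The Lagrangian Gauss map `ν(z) = zⁿ` of the Weierstrass data
`(z^{n+1}/(n+1), z)`, as a map `ℂ → ℂ ∪ {∞}`. -/
def nuPow (n : ℕ) (z : ℂ) : OnePoint ℂ := ((z ^ n : ℂ) : OnePoint ℂ)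

/-- The multiplicity with which `zⁿ` attains its value at `z`. -/
def multPow (n : ℕ) (z : ℂ) : ℕ :=
  Polynomial.rootMultiplicity z ((Polynomial.X : Polynomial ℂ) ^ n - Polynomial.C (z ^ n))

/-- `b` is a totally ramified value of `ν(z) = zⁿ` on `ℂ` (omitted values count
vacuously). -/
def totRamPow (n : ℕ) (b : OnePoint ℂ) : Prop :=
  ∀ z : ℂ, nuPow n z = b → 2 ≤ multPow n z

/-- The weight `1 − 1/m_b` of the value `b` in `δ_ν` for `ν(z) = zⁿ` on `ℂ`
(weight `1` for omitted values). -/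
def ramWeightPow (n : ℕ) (b : OnePoint ℂ) : ℝ :=
  if ∀ z : ℂ, nuPow n z ≠ b then 1
  else 1 - 1 / ((sInf (multPow n '' {z | nuPow n z = b}) : ℕ) : ℝ)

/-! ### Auxiliary lemmas -/

lemma nuPow_ne_infty (n : ℕ) (z : ℂ) : nuPow n z ≠ OnePoint.infty :=
  OnePoint.coe_ne_infty _

lemma nuPow_eq_coe_iff (n : ℕ) (z c : ℂ) :
    nuPow n z = (c : OnePoint ℂ) ↔ z ^ n = c := by
  simp [nuPow, OnePoint.coe_eq_coe]

lemma multPow_zero {n : ℕ} (hn : 1 ≤ n) : multPow n 0 = n := by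
  have : ((Polynomial.X : Polynomial ℂ) ^ n - Polynomial.C ((0:ℂ) ^ n))
      = (Polynomial.X - Polynomial.C (0:ℂ)) ^ n := by
    simp [zero_pow (by omega : n ≠ 0)]
  rw [multPow, this, Polynomial.rootMultiplicity_X_sub_C_pow]

lemma multPow_of_ne_zero {n : ℕ} (hn : 1 ≤ n) {z : ℂ} (hz : z ≠ 0) :
    multPow n z = 1 := by
  set p : Polynomial ℂ := Polynomial.X ^ n - Polynomial.C (z ^ n) with hp
  have hp0 : p ≠ 0 := by
    intro h
    have := congrArg (Polynomial.eval 0) h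
    simp [hp, zero_pow (by omega : n ≠ 0)] at this
    exact hz this.1
  have hroot : p.IsRoot z := by simp [hp, Polynomial.IsRoot]
  have h1 : 1 ≤ p.rootMultiplicity z :=
    (Polynomial.rootMultiplicity_pos hp0).mpr hroot
  have h2 : p.rootMultiplicity z ≤ 1 := by
    rw [Polynomial.rootMultiplicity_le_iff hp0]
    intro hdvd
    obtain ⟨q, hq⟩ := hdvd
    have hder := congrArg Polynomial.derivative hq
    have heval := congrArg (Polynomial.eval z) hder
    simp [hp, Polynomial.derivative_pow] at heval
    rcases heval with h | h
    · exact absurd h (Nat.cast_ne_zero.mpr (by omega))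
    · exact hz h.1
  exact le_antisymm h2 h1

lemma ramWeightPow_infty (n : ℕ) : ramWeightPow n OnePoint.infty = 1 := by
  rw [ramWeightPow, if_pos]
  exact fun z => nuPow_ne_infty n z

lemma ramWeightPow_zero {n : ℕ} (hn : 1 ≤ n) :
    ramWeightPow n ((0 : ℂ) : OnePoint ℂ) = 1 - 1 / (n : ℝ) := by
  have h0 : nuPow n 0 = ((0 : ℂ) : OnePoint ℂ) := by
    rw [nuPow_eq_coe_iff]; exact zero_pow (by omega)
  rw [ramWeightPow, if_neg (by push_neg; exact ⟨0, h0⟩)]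
  have hset : {z : ℂ | nuPow n z = ((0:ℂ) : OnePoint ℂ)} = {0} := by
    ext z
    simp only [mem_setOf_eq, mem_singleton_iff, nuPow_eq_coe_iff]
    exact ⟨fun h => pow_eq_zero_iff (by omega : n ≠ 0) |>.mp h,
      fun h => by simp [h, zero_pow (by omega : n ≠ 0)]⟩
  rw [hset, image_singleton, csInf_singleton, multPow_zero hn]

/-- Key estimate: a C¹ path of finite length (for a metric with `lam ≥ 1`) stays in a
bounded set. -/
lemma not_divergent_of_finite_length (lam : ℂ → ℝ) (hlam : ∀ z, 1 ≤ lam z)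
    (γ : ℝ → ℂ) (hγ : ContDiffOn ℝ 1 γ (Ico (0:ℝ) 1))
    (hfin : PathLength lam γ ≠ ⊤) : ¬ DivergentPath γ := by
  set g' : ℝ → ℂ := derivWithin γ (Ico (0:ℝ) 1) with hg'
  set M : ℝ≥0∞ := ∫⁻ t in Ico (0:ℝ) 1, ENNReal.ofReal ‖g' t‖ with hM
  have hMfin : M ≠ ⊤ := by
    have hle : M ≤ PathLength lam γ := by
      apply lintegral_mono
      intro t
      apply ENNReal.ofReal_le_ofReal
      calc ‖g' t‖ = 1 * ‖g' t‖ := (one_mul _).symm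
        _ ≤ lam (γ t) * ‖g' t‖ :=
          mul_le_mul_of_nonneg_right (hlam _) (norm_nonneg _)
    exact fun h => hfin (top_le_iff.mp (h ▸ hle))
  have hcontg' : ContinuousOn g' (Ico (0:ℝ) 1) :=
    hγ.continuousOn_derivWithin (uniqueDiffOn_Ico 0 1) le_rfl
  -- bound on displacement
  have hbound : ∀ t ∈ Ico (0:ℝ) 1, ‖γ t - γ 0‖ ≤ M.toReal := by
    intro t ht
    obtain ⟨ht0, ht1⟩ := ht
    have hsub : Icc (0:ℝ) t ⊆ Ico (0:ℝ) 1 := fun x hx =>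
      ⟨hx.1, lt_of_le_of_lt hx.2 ht1⟩
    have hftc : ∫ s in (0:ℝ)..t, g' s = γ t - γ 0 := by
      apply intervalIntegral.integral_eq_sub_of_hasDeriv_right_of_le ht0
        (hγ.continuousOn.mono hsub)
      · intro x hx
        have hxmem : x ∈ Ico (0:ℝ) 1 := ⟨hx.1.le, lt_of_lt_of_le hx.2 ht1.le⟩
        have hd : HasDerivWithinAt γ (g' x) (Ico (0:ℝ) 1) x :=
          ((hγ.differentiableOn one_ne_zero) x hxmem).hasDerivWithinAt
        apply hd.mono_of_mem_nhdsWithin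
        have : Ioi x ∩ Iio 1 ∈ nhdsWithin x (Ioi x) :=
          inter_mem_nhdsWithin _ (Iio_mem_nhds (lt_of_lt_of_le hx.2 ht1.le))
        exact Filter.mem_of_superset this fun y hy => ⟨(hx.1.trans hy.1).le, hy.2⟩
      · exact (hcontg'.mono hsub).intervalIntegrable_of_Icc ht0
    have h1 : (‖γ t - γ 0‖₊ : ℝ≥0∞) ≤ M := by
      rw [← hftc, intervalIntegral.integral_of_le ht0]
      calc (‖∫ s in Ioc (0:ℝ) t, g' s‖₊ : ℝ≥0∞)
          ≤ ∫⁻ s in Ioc (0:ℝ) t, (‖g' s‖₊ : ℝ≥0∞) :=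
            enorm_integral_le_lintegral_enorm _
        _ ≤ ∫⁻ s in Ico (0:ℝ) 1, (‖g' s‖₊ : ℝ≥0∞) :=
            lintegral_mono_set (fun x hx => ⟨hx.1.le, lt_of_le_of_lt hx.2 ht1⟩)
        _ = M := by simp only [hM, ofReal_norm, enorm_eq_nnnorm]
    calc ‖γ t - γ 0‖ = ((‖γ t - γ 0‖₊ : ℝ≥0∞)).toReal := by simp
      _ ≤ M.toReal := ENNReal.toReal_mono hMfin h1
  intro hdiv
  obtain ⟨t₀, ht₀, hout⟩ := hdiv (Metric.closedBall (γ 0) (M.toReal + 1))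
    (isCompact_closedBall _ _)
  have := hout t₀ ⟨le_rfl, ht₀.2⟩
  apply this
  rw [Metric.mem_closedBall, dist_eq_norm]
  exact (hbound t₀ ht₀).trans (by linarith)

/-- Sharpness of **Theorem 2.1** for `(γ, k, d) = (0, 1, n)`: the Weierstrass data
`(z^{n+1}/(n+1), z)` on `ℂ` is regular, its induced metric `2(1+|z|^{2n})|dz|²` is
complete, its Lagrangian Gauss map is `ν(z) = zⁿ`, which omits `∞`, attains `0`
only at `z = 0` with multiplicity `n`, has no other totally ramified values, and has
totally ramified value number `δ_ν = 2 − 1/n`, attaining the bound `δ_ν ≤ 2 − 1/d`. -/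
theorem sharpness_example_one_end
    (n : ℕ) (hn : 1 ≤ n) :
    (∀ z : ℂ, deriv (fun w : ℂ => w ^ (n + 1) / ((n : ℂ) + 1)) z ≠ 0 ∨
        deriv (fun w : ℂ => w) z ≠ 0) ∧
    (∀ z : ℂ, deriv (fun w : ℂ => w ^ (n + 1) / ((n : ℂ) + 1)) z /
        deriv (fun w : ℂ => w) z = z ^ n) ∧
    ConformalComplete Set.univ (fun z => Real.sqrt (2 * (1 + ‖z‖ ^ (2 * n)))) ∧
    (∀ z : ℂ, nuPow n z ≠ OnePoint.infty) ∧
    (∀ z : ℂ, nuPow n z = ((0 : ℂ) : OnePoint ℂ) → z = 0) ∧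
    multPow n 0 = n ∧
    (∀ b : OnePoint ℂ, totRamPow n b →
        b = OnePoint.infty ∨ b = ((0 : ℂ) : OnePoint ℂ)) ∧
    (∀ T : Finset (OnePoint ℂ), (∀ b ∈ T, totRamPow n b) →
        ∑ b ∈ T, ramWeightPow n b ≤ 2 - 1 / (n : ℝ)) ∧
    (∃ T : Finset (OnePoint ℂ), (∀ b ∈ T, totRamPow n b) ∧
        ∑ b ∈ T, ramWeightPow n b = 2 - 1 / (n : ℝ)) := by
  have hcast : ((n : ℂ) + 1) ≠ 0 := by
    have := Nat.cast_add_one_ne_zero (R := ℂ) n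
    simpa using this
  have hderivF : ∀ z : ℂ, deriv (fun w : ℂ => w ^ (n + 1) / ((n : ℂ) + 1)) z = z ^ n := by
    intro z
    rw [deriv_div_const, deriv_pow_field]
    push_cast
    field_simp
  have hderivG : ∀ z : ℂ, deriv (fun w : ℂ => w) z = 1 := fun z => deriv_id z
  have hclass : ∀ b : OnePoint ℂ, totRamPow n b →
      b = OnePoint.infty ∨ b = ((0 : ℂ) : OnePoint ℂ) := by
    intro b hb
    cases b with
    | infty => exact Or.inl rfl
    | coe c =>
      right
      by_contra hc
      have hc0 : c ≠ 0 := fun h => hc (by rw [h])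
      obtain ⟨z, hz⟩ := IsAlgClosed.exists_pow_nat_eq c (by omega : 0 < n)
      have hz0 : z ≠ 0 := by
        intro h
        apply hc0
        rw [← hz, h, zero_pow (by omega : n ≠ 0)]
      have := hb z ((nuPow_eq_coe_iff n z c).mpr hz)
      rw [multPow_of_ne_zero hn hz0] at this
      omega
  refine ⟨fun z => Or.inr (by rw [hderivG]; exact one_ne_zero),
    fun z => by rw [hderivF, hderivG, div_one],
    ?_, nuPow_ne_infty n,
    fun z h => pow_eq_zero_iff (by omega : n ≠ 0) |>.mp ((nuPow_eq_coe_iff n z 0).mp h),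
    multPow_zero hn, hclass, ?_, ?_⟩
  · -- completeness
    intro γ hγ _ hdiv
    by_contra hfin
    exact not_divergent_of_finite_length _
      (fun z => by
        have hx : (0:ℝ) ≤ ‖z‖ ^ (2 * n) := pow_nonneg (norm_nonneg z) _
        have h1 : (1:ℝ) ≤ 2 * (1 + ‖z‖ ^ (2 * n)) := by nlinarith
        calc (1:ℝ) = Real.sqrt 1 := by simp
          _ ≤ _ := Real.sqrt_le_sqrt h1)
      γ hγ hfin hdiv
  · -- upper bound for any finite set of totally ramified values
    intro T hT
    have hsub : T ⊆ {OnePoint.infty, ((0:ℂ) : OnePoint ℂ)} := by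
      intro b hb
      rcases hclass b (hT b hb) with h | h <;> simp [h]
    have hw0 : (0:ℝ) ≤ 1 - 1 / (n : ℝ) := by
      have h1 : 1 / (n : ℝ) ≤ 1 := by
        apply div_le_one_of_le₀
        · exact_mod_cast hn
        · positivity
      linarith
    calc ∑ b ∈ T, ramWeightPow n b
        ≤ ∑ b ∈ ({OnePoint.infty, ((0:ℂ) : OnePoint ℂ)} : Finset (OnePoint ℂ)),
            ramWeightPow n b := by
          apply Finset.sum_le_sum_of_subset_of_nonneg hsub
          intro b hb _
          simp only [Finset.mem_insert, Finset.mem_singleton] at hb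
          rcases hb with h | h
          · rw [h, ramWeightPow_infty]; norm_num
          · rw [h, ramWeightPow_zero hn]; exact hw0
      _ = 2 - 1 / (n : ℝ) := by
          rw [Finset.sum_insert (by simp),
            Finset.sum_singleton, ramWeightPow_infty, ramWeightPow_zero hn]
          ring
  · -- the bound is attained
    rcases eq_or_lt_of_le hn with h1 | h2
    · refine ⟨{OnePoint.infty}, ?_, ?_⟩
      · intro b hb
        rw [Finset.mem_singleton] at hb
        subst hb
        intro z hz
        exact absurd hz (nuPow_ne_infty n z)
      · rw [Finset.sum_singleton, ramWeightPow_infty, ← h1]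
        norm_num
    · refine ⟨{OnePoint.infty, ((0:ℂ) : OnePoint ℂ)}, ?_, ?_⟩
      · intro b hb
        simp only [Finset.mem_insert, Finset.mem_singleton] at hb
        rcases hb with h | h <;> subst h
        · intro z hz
          exact absurd hz (nuPow_ne_infty n z)
        · intro z hz
          have hz0 : z = 0 :=
            pow_eq_zero_iff (by omega : n ≠ 0) |>.mp ((nuPow_eq_coe_iff n z 0).mp hz)
          rw [hz0, multPow_zero hn]
          omega
      · rw [Finset.sum_insert (by simp),
          Finset.sum_singleton, ramWeightPow_infty, ramWeightPow_zero hn]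
        ring

end
end

section
/- Let a₁, a₂ be distinct points of ℂ and set Ω = ℂ \ {a₁, a₂}. Then the conformal metric dτ² = 2(1+|z|²)/(|z−a₁|²|z−a₂|²) |dz|² is complete on Ω: every piecewise C¹ path γ : [0,1) → Ω that eventually leaves every compact subset of Ω has infinite length with respect to dτ. (This is the induced metric of the Voss-type Weierstrass data with ν = z and dG = dz/((z−a₁)(z−a₂)); pulling back to the universal cover yields a weakly complete improper affine front whose Lagrangian Gauss map omits exactly the three values a₁, a₂, ∞, showing the bound of the paper's Theorem 3.2 is sharp.) -/
open MeasureTheory Set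
open scoped ENNReal Classical

noncomputable section

lemma voss_aux_normSq (z : ℂ) : ‖z‖^2 = z.re^2 + z.im^2 := by
  rw [Complex.sq_norm, Complex.normSq_apply]; ring

lemma voss_aux_cs (z w : ℂ) : |z.re*w.re + z.im*w.im| ≤ ‖z‖*‖w‖ := by
  rw [Complex.norm_def, Complex.norm_def,
    ← Real.sqrt_mul (Complex.normSq_nonneg z), ← Real.sqrt_sq_eq_abs]
  apply Real.sqrt_le_sqrt
  simp only [Complex.normSq_apply]
  nlinarith [sq_nonneg (z.re*w.im - z.im*w.re)]

lemma voss_aux_metric_lb (a₁ a₂ z : ℂ) (h1 : z ≠ a₁) (h2 : z ≠ a₂) :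
    2*‖z‖/(1+‖z‖^2) ≤ 4*(1+‖a₁‖+‖a₂‖)^2 *
      Real.sqrt (2 * (1 + ‖z‖ ^ 2) / (‖z - a₁‖ ^ 2 * ‖z - a₂‖ ^ 2)) := by
  set r := ‖z‖ with hr
  set d₁ := ‖z - a₁‖ with hd₁
  set d₂ := ‖z - a₂‖ with hd₂
  have hr0 : 0 ≤ r := norm_nonneg _
  have hd₁0 : 0 < d₁ := by simpa [hd₁, sub_eq_zero] using h1
  have hd₂0 : 0 < d₂ := by simpa [hd₂, sub_eq_zero] using h2
  set M := 1+‖a₁‖+‖a₂‖ with hM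
  have hM1 : 1 ≤ M := by
    have := norm_nonneg a₁; have := norm_nonneg a₂; rw [hM]; linarith
  have hsq : d₁^2*d₂^2 = (d₁*d₂)^2 := by ring
  rw [hsq, Real.sqrt_div (by positivity), Real.sqrt_sq (by positivity)]
  have h1r : 1 + r ≤ Real.sqrt (2*(1+r^2)) := by
    rw [show (1+r) = Real.sqrt ((1+r)^2) from (Real.sqrt_sq (by positivity)).symm]
    exact Real.sqrt_le_sqrt (by nlinarith [sq_nonneg (1-r)])
  have hle1 : d₁ ≤ M*(1+r) := by
    have h := norm_sub_le z a₁
    have := norm_nonneg a₁; have := norm_nonneg a₂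
    rw [hd₁, hM]; nlinarith
  have hle2 : d₂ ≤ M*(1+r) := by
    have h := norm_sub_le z a₂
    have := norm_nonneg a₁; have := norm_nonneg a₂
    rw [hd₂, hM]; nlinarith
  have hdd : d₁*d₂ ≤ M^2*(1+r)^2 := by nlinarith
  rw [← mul_div_assoc, div_le_div_iff₀ (by positivity) (by positivity)]
  have base : 2*r*(1+r)^2 ≤ 4*((1+r)*(1+r^2)) := by nlinarith [sq_nonneg (1-r), hr0]
  calc 2*r*(d₁*d₂) ≤ 2*r*(M^2*(1+r)^2) := mul_le_mul_of_nonneg_left hdd (by positivity)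
    _ ≤ 4*M^2*((1+r)*(1+r^2)) := by nlinarith [mul_le_mul_of_nonneg_left base (sq_nonneg M)]
    _ ≤ 4*M^2*(Real.sqrt (2*(1+r^2))*(1+r^2)) := by
        have h2 := mul_le_mul_of_nonneg_right h1r (show (0:ℝ) ≤ 1+r^2 by positivity)
        nlinarith [sq_nonneg M]
    _ = 4*M^2*Real.sqrt (2*(1+r^2))*(1+r^2) := by ring

lemma voss_aux_deriv {γ : ℝ → ℂ} (hγ : ContDiffOn ℝ 1 γ (Ico (0:ℝ) 1)) {t : ℝ}
    (ht : t ∈ Ico (0:ℝ) 1) :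
    HasDerivWithinAt (fun u => Real.log (1 + ((γ u).re^2 + (γ u).im^2)))
      (2*((γ t).re*(derivWithin γ (Ico (0:ℝ) 1) t).re
          + (γ t).im*(derivWithin γ (Ico (0:ℝ) 1) t).im)
        / (1 + ((γ t).re^2 + (γ t).im^2)))
      (Ico (0:ℝ) 1) t := by
  set D := derivWithin γ (Ico (0:ℝ) 1) with hD
  have hDt : HasDerivWithinAt γ (D t) (Ico (0:ℝ) 1) t :=
    (hγ.differentiableOn one_ne_zero t ht).hasDerivWithinAt
  have hre : HasDerivWithinAt (fun u => (γ u).re) ((D t).re) (Ico (0:ℝ) 1) t := by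
    exact (Complex.reCLM.hasFDerivAt.comp_hasDerivWithinAt t hDt)
  have him : HasDerivWithinAt (fun u => (γ u).im) ((D t).im) (Ico (0:ℝ) 1) t := by
    exact (Complex.imCLM.hasFDerivAt.comp_hasDerivWithinAt t hDt)
  have hφ : HasDerivWithinAt (fun u => 1 + ((γ u).re^2 + (γ u).im^2))
      (2*((γ t).re*(D t).re + (γ t).im*(D t).im)) (Ico (0:ℝ) 1) t := by
    have := ((hre.pow 2).add (him.pow 2)).const_add (1:ℝ)
    refine this.congr_deriv ?_
    ring
  have hpos : (0:ℝ) < 1 + ((γ t).re^2 + (γ t).im^2) := by positivity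
  have hlog := (Real.hasDerivAt_log hpos.ne').comp_hasDerivWithinAt t hφ
  refine hlog.congr_deriv ?_
  field_simp

/-- The induced metric `dτ² = 2(1+|z|²)/(|z−a₁|²|z−a₂|²)|dz|²` of the Voss-type
Weierstrass data (with `ν = z` and `dG = dz/((z−a₁)(z−a₂))`) is complete on
`Ω = ℂ \ {a₁, a₂}`. -/
theorem voss_type_metric_is_complete
    (a₁ a₂ : ℂ) (hne : a₁ ≠ a₂) :
    ConformalComplete {z : ℂ | z ≠ a₁ ∧ z ≠ a₂}
      (fun z => Real.sqrt (2 * (1 + ‖z‖ ^ 2) / (‖z - a₁‖ ^ 2 * ‖z - a₂‖ ^ 2))) := by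
  intro γ hγ hmaps hdiv
  set lam : ℂ → ℝ :=
    fun z => Real.sqrt (2 * (1 + ‖z‖ ^ 2) / (‖z - a₁‖ ^ 2 * ‖z - a₂‖ ^ 2)) with hlam
  set D := derivWithin γ (Ico (0:ℝ) 1) with hD
  set C := 4*(1+‖a₁‖+‖a₂‖)^2 with hC
  have hC0 : (0:ℝ) ≤ C := by positivity
  set f : ℝ → ℝ := fun u => Real.log (1 + ((γ u).re^2 + (γ u).im^2)) with hf
  set h : ℝ → ℝ := fun u =>
    2*((γ u).re*(D u).re + (γ u).im*(D u).im) / (1 + ((γ u).re^2 + (γ u).im^2)) with hh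
  -- pointwise comparison of |h| with the metric integrand
  have hbound : ∀ t ∈ Ico (0:ℝ) 1, |h t| ≤ C * (lam (γ t) * ‖D t‖) := by
    intro t ht
    obtain ⟨hz1, hz2⟩ := hmaps ht
    have hcs := voss_aux_cs (γ t) (D t)
    have hml := voss_aux_metric_lb a₁ a₂ (γ t) hz1 hz2
    have hr0 : (0:ℝ) ≤ ‖γ t‖ := norm_nonneg _
    have hn0 : (0:ℝ) ≤ ‖D t‖ := norm_nonneg _
    have hpos : (0:ℝ) < 1 + ((γ t).re^2 + (γ t).im^2) := by positivity
    have hns := voss_aux_normSq (γ t)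
    have hml' : 2*‖γ t‖ ≤ C * lam (γ t) * (1 + ‖γ t‖^2) := by
      rw [div_le_iff₀ (by positivity)] at hml
      calc 2*‖γ t‖ ≤ C * Real.sqrt (2 * (1 + ‖γ t‖ ^ 2) / (‖γ t - a₁‖ ^ 2 * ‖γ t - a₂‖ ^ 2))
            * (1 + ‖γ t‖^2) := by rw [hC]; linarith [hml]
        _ = C * lam (γ t) * (1 + ‖γ t‖^2) := by rw [hlam]
    rw [hh, abs_div, abs_of_pos hpos, div_le_iff₀ hpos, ← hns]
    have habs : |2*((γ t).re*(D t).re + (γ t).im*(D t).im)| ≤ 2*(‖γ t‖*‖D t‖) := by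
      rw [abs_mul, abs_two]
      exact mul_le_mul_of_nonneg_left hcs (by norm_num)
    have hlam0 : 0 ≤ lam (γ t) := Real.sqrt_nonneg _
    nlinarith [mul_le_mul_of_nonneg_right hml' hn0,
      mul_le_mul_of_nonneg_right habs (le_of_lt (by positivity : (0:ℝ) < 1)),
      mul_nonneg (mul_nonneg hC0 hlam0) hn0]
  -- key estimate via FTC
  have key : ∀ s ∈ Ico (0:ℝ) 1,
      ENNReal.ofReal (f s - f 0) ≤ ENNReal.ofReal C * PathLength lam γ := by
    intro s hs
    have hsub : Icc (0:ℝ) s ⊆ Ico (0:ℝ) 1 := fun x hx => ⟨hx.1, lt_of_le_of_lt hx.2 hs.2⟩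
    have cγ : ContinuousOn γ (Icc (0:ℝ) s) := hγ.continuousOn.mono hsub
    have cD : ContinuousOn D (Icc (0:ℝ) s) :=
      (hγ.continuousOn_derivWithin (uniqueDiffOn_Ico 0 1) le_rfl).mono hsub
    have cre : ContinuousOn (fun u => (γ u).re) (Icc (0:ℝ) s) :=
      Complex.continuous_re.comp_continuousOn cγ
    have cim : ContinuousOn (fun u => (γ u).im) (Icc (0:ℝ) s) :=
      Complex.continuous_im.comp_continuousOn cγ
    have cDre : ContinuousOn (fun u => (D u).re) (Icc (0:ℝ) s) :=
      Complex.continuous_re.comp_continuousOn cD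
    have cDim : ContinuousOn (fun u => (D u).im) (Icc (0:ℝ) s) :=
      Complex.continuous_im.comp_continuousOn cD
    have cφ : ContinuousOn (fun u => 1 + ((γ u).re^2 + (γ u).im^2)) (Icc (0:ℝ) s) :=
      continuousOn_const.add ((cre.pow 2).add (cim.pow 2))
    have hφne : ∀ x ∈ Icc (0:ℝ) s, 1 + ((γ x).re^2 + (γ x).im^2) ≠ 0 :=
      fun x _ => by positivity
    have hhcont : ContinuousOn h (Icc (0:ℝ) s) := by
      rw [hh]
      exact ((continuousOn_const.mul ((cre.mul cDre).add (cim.mul cDim)))).div cφ hφne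
    have hfcont : ContinuousOn f (Icc (0:ℝ) s) := by
      rw [hf]
      exact cφ.log hφne
    have hderiv : ∀ x ∈ Ioo (0:ℝ) s, HasDerivWithinAt f (h x) (Ioi x) x := by
      intro x hx
      have hx' : x ∈ Ico (0:ℝ) 1 := ⟨hx.1.le, lt_trans hx.2 hs.2⟩
      have hd := voss_aux_deriv hγ hx'
      have hnhds : Ico (0:ℝ) 1 ∈ nhds x := Ico_mem_nhds hx.1 hx'.2
      exact (hd.hasDerivAt hnhds).hasDerivWithinAt
    have hicc : uIcc (0:ℝ) s = Icc (0:ℝ) s := uIcc_of_le hs.1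
    have hint : IntervalIntegrable h volume 0 s := (hicc ▸ hhcont).intervalIntegrable
    have hftc : ∫ u in (0:ℝ)..s, h u = f s - f 0 :=
      intervalIntegral.integral_eq_sub_of_hasDeriv_right_of_le hs.1 hfcont hderiv hint
    have h1 : f s - f 0 ≤ ∫ u in (0:ℝ)..s, |h u| := by
      rw [← hftc]
      exact le_trans (le_abs_self _) (intervalIntegral.abs_integral_le_integral_abs hs.1)
    have h2 : ∫ u in (0:ℝ)..s, |h u| = ∫ u in Ioc (0:ℝ) s, |h u| :=
      intervalIntegral.integral_of_le hs.1
    have h3 : ENNReal.ofReal (∫ u in Ioc (0:ℝ) s, |h u|)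
        = ∫⁻ u in Ioc (0:ℝ) s, ENNReal.ofReal |h u| :=
      ofReal_integral_eq_lintegral_ofReal hint.1.abs
        (Filter.Eventually.of_forall fun u => abs_nonneg _)
    have h4 : (∫⁻ u in Ioc (0:ℝ) s, ENNReal.ofReal |h u|)
        ≤ ∫⁻ u in Ico (0:ℝ) 1, ENNReal.ofReal |h u| :=
      lintegral_mono_set (fun x hx => ⟨hx.1.le, lt_of_le_of_lt hx.2 hs.2⟩)
    have h5 : (∫⁻ u in Ico (0:ℝ) 1, ENNReal.ofReal |h u|)
        ≤ ∫⁻ u in Ico (0:ℝ) 1, ENNReal.ofReal (C * (lam (γ u) * ‖D u‖)) := by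
      apply lintegral_mono_ae
      rw [ae_restrict_iff' measurableSet_Ico]
      exact Filter.Eventually.of_forall fun t ht => ENNReal.ofReal_le_ofReal (hbound t ht)
    have h6 : (∫⁻ u in Ico (0:ℝ) 1, ENNReal.ofReal (C * (lam (γ u) * ‖D u‖)))
        = ENNReal.ofReal C * PathLength lam γ := by
      simp only [ENNReal.ofReal_mul hC0]
      rw [lintegral_const_mul' _ _ ENNReal.ofReal_ne_top]
      rfl
    calc ENNReal.ofReal (f s - f 0) ≤ ENNReal.ofReal (∫ u in Ioc (0:ℝ) s, |h u|) := by
          rw [← h2]; exact ENNReal.ofReal_le_ofReal h1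
      _ = ∫⁻ u in Ioc (0:ℝ) s, ENNReal.ofReal |h u| := h3
      _ ≤ ∫⁻ u in Ico (0:ℝ) 1, ENNReal.ofReal |h u| := h4
      _ ≤ ∫⁻ u in Ico (0:ℝ) 1, ENNReal.ofReal (C * (lam (γ u) * ‖D u‖)) := h5
      _ = ENNReal.ofReal C * PathLength lam γ := h6
  -- conclusion
  by_contra hPL
  have hfin : ENNReal.ofReal C * PathLength lam γ ≠ ⊤ :=
    ENNReal.mul_ne_top ENNReal.ofReal_ne_top hPL
  set B := (ENNReal.ofReal C * PathLength lam γ).toReal with hB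
  obtain ⟨t₀, ht₀, hK⟩ := hdiv (Metric.closedBall 0 (Real.exp (f 0 + B)))
    (isCompact_closedBall _ _)
  have hle : f t₀ - f 0 ≤ B :=
    (ENNReal.ofReal_le_iff_le_toReal hfin).1 (key t₀ ht₀)
  have hγt₀ := hK t₀ ⟨le_refl t₀, ht₀.2⟩
  have hR : Real.exp (f 0 + B) < ‖γ t₀‖ := by
    have := hγt₀
    rw [Metric.mem_closedBall, dist_zero_right] at this
    exact lt_of_not_ge this
  have hexp : (0:ℝ) < Real.exp (f 0 + B) := Real.exp_pos _
  have hlt : Real.exp (f 0 + B) < 1 + ((γ t₀).re^2 + (γ t₀).im^2) := by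
    have hns := voss_aux_normSq (γ t₀)
    nlinarith [norm_nonneg (γ t₀), sq_nonneg (1 - ‖γ t₀‖)]
  have : f 0 + B < f t₀ := by
    calc f 0 + B = Real.log (Real.exp (f 0 + B)) := (Real.log_exp _).symm
      _ < Real.log (1 + ((γ t₀).re^2 + (γ t₀).im^2)) := Real.log_lt_log hexp hlt
      _ = f t₀ := rfl
  linarith
end
end
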